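/- Let (G,·,e,⊙) be a left group-e-semigroup. Then for every x ∈ G the inverse of e⊙x in the group (e⊙G,⊙) (whose identity is e⊙e) is e⊙x⁻¹, and moreover e⊙x⁻¹ = e⊙((e⊙x)⁻¹); that is, (e⊙x)⊙(e⊙x⁻¹) = e⊙e = (e⊙x⁻¹)⊙(e⊙x) and e⊙x⁻¹ = e⊙((e⊙x)⁻¹), where x⁻¹ and (e⊙x)⁻¹ denote inverses taken in the group (G,·). -/

import Mathlib

/-!
The map `x ↦ e ⊙ x` is a homomorphism from `(G, ·)` to `(e ⊙ G, ⊙)` that fixes `e ⊙ G`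
pointwise. So `e ⊙ x⁻¹` is the inverse of `e ⊙ x`, and so is `e ⊙ (e ⊙ x)⁻¹`, because
`e ⊙ x = e ⊙ (e ⊙ x)`; the two agree by uniqueness of inverses in a monoid.
-/

section LeftGroupESemigroup

variable {G : Type*} [Group G] {op : G → G → G}

theorem op_op_one_one (hassoc : ∀ x y z : G, op (op x y) z = op x (op y z))
    (hjoin : ∀ x y : G, op 1 (x * y) = op 1 (op x y)) (x : G) :
    op (op 1 x) 1 = op 1 x := by
  rw [hassoc, ← hjoin, mul_one]

theorem op_one_map_mul (hassoc : ∀ x y z : G, op (op x y) z = op x (op y z))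
    (hjoin : ∀ x y : G, op 1 (x * y) = op 1 (op x y)) (x y : G) :
    op 1 (x * y) = op (op 1 x) (op 1 y) := by
  rw [← hassoc, op_op_one_one hassoc hjoin, hassoc, ← hjoin]

theorem op_one_op_one (hjoin : ∀ x y : G, op 1 (x * y) = op 1 (op x y)) (x : G) :
    op 1 (op 1 x) = op 1 x := by
  rw [← hjoin, one_mul]

theorem op_one_inv (hassoc : ∀ x y z : G, op (op x y) z = op x (op y z))
    (hjoin : ∀ x y : G, op 1 (x * y) = op 1 (op x y)) (x : G) :
    op 1 x⁻¹ = op 1 (op 1 x)⁻¹ := by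
  have map_mul := op_one_map_mul hassoc hjoin
  calc op 1 x⁻¹ = op (op 1 x⁻¹) (op 1 (op 1 x * (op 1 x)⁻¹)) := by
        rw [mul_inv_cancel, ← map_mul, mul_one]
    _ = op (op (op 1 x⁻¹) (op 1 x)) (op 1 (op 1 x)⁻¹) := by
        rw [map_mul, op_one_op_one hjoin, ← hassoc]
    _ = op 1 (op 1 x)⁻¹ := by
        rw [← map_mul, inv_mul_cancel, ← map_mul, one_mul]

end LeftGroupESemigroup

/-- In a left group-`e`-semigroup `(G, ·, e, ⊙)` (group identity `e = 1`),
for every `x ∈ G` the inverse of `e ⊙ x` in the group `(e ⊙ G, ⊙)` (whose identity is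
`e ⊙ e`) is `e ⊙ x⁻¹`, and moreover `e ⊙ x⁻¹ = e ⊙ ((e ⊙ x)⁻¹)`, inverses `x⁻¹` and
`(e ⊙ x)⁻¹` being taken in the group `(G, ·)`. -/
theorem stmt_6 {G : Type*} [Group G] (op : G → G → G)
    (hassoc : ∀ x y z : G, op (op x y) z = op x (op y z))
    (hjoin : ∀ x y : G, op 1 (x * y) = op 1 (op x y)) :
    ∀ x : G, (op (op 1 x) (op 1 x⁻¹) = op 1 1 ∧ op (op 1 x⁻¹) (op 1 x) = op 1 1) ∧
      op 1 x⁻¹ = op 1 (op 1 x)⁻¹ := by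
  intro x
  have map_mul := op_one_map_mul hassoc hjoin
  refine ⟨⟨?_, ?_⟩, op_one_inv hassoc hjoin x⟩
  · rw [← map_mul, mul_inv_cancel]
  · rw [← map_mul, inv_mul_cancel]
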